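/- arXiv:2211.05867 — 3 statements merged into one kernel-verified Lean document; each statement's English description precedes it below -/
import Mathlib

section
/- Let H ∈ ℝ^{n_y × n_x} have full row rank n_y with Moore–Penrose pseudoinverse H† = Hᵀ(HHᵀ)⁻¹, and let g_η = I − H†H. Suppose x ∈ ℝ^{n_x} satisfies ‖x‖_∞ ≤ η and y = Hx + v with v ∈ Z_v for a zonotope Z_v = ⟨c_v, G_v⟩ ⊂ ℝ^{n_y}. Then x belongs to the zonotope Z_{x|y} = H†(y − Z_v) + g_η Z_η, where Z_η = ⟨0, η I_{n_x}⟩; explicitly, Z_{x|y} has center H†(y − c_v) and generator matrix [H†G_v, η g_η]. -/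
def zonotope {V : Type*} [AddCommGroup V] [Module ℝ V] {ι : Type*} [Fintype ι]
    (c : V) (g : ι → V) : Set V :=
  {x | ∃ β : ι → ℝ, (∀ i, |β i| ≤ 1) ∧ x = c + ∑ i, β i • g i}

theorem state_containment_zonotope {ny nx γv : ℕ}
    (H : Matrix (Fin ny) (Fin nx) ℝ) (hrank : H.rank = ny)
    (η : ℝ) (cv : Fin ny → ℝ) (Gv : Fin γv → Fin ny → ℝ)
    (x : Fin nx → ℝ) (v y : Fin ny → ℝ)
    (hx : ∀ k, |x k| ≤ η)
    (hv : v ∈ zonotope cv Gv)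
    (hy : y = H.mulVec x + v) :
    x ∈ zonotope ((H.transpose * (H * H.transpose)⁻¹).mulVec (y - cv))
        (Sum.elim
          (fun i => (H.transpose * (H * H.transpose)⁻¹).mulVec (Gv i))
          (fun j : Fin nx => fun k : Fin nx =>
            η * ((1 : Matrix (Fin nx) (Fin nx) ℝ)
                  - H.transpose * (H * H.transpose)⁻¹ * H) k j)) := by
  classical
  obtain ⟨βv, hβv, hveq⟩ := hv
  set P := H.transpose * (H * H.transpose)⁻¹ with hP
  set M := (1 : Matrix (Fin nx) (Fin nx) ℝ) - P * H with hM
  refine ⟨Sum.elim (fun i => -βv i) (fun j => if η = 0 then 0 else x j / η), ?_, ?_⟩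
  · rintro (i | j)
    · simpa using hβv i
    · by_cases hη : η = 0
      · simp [hη]
      · have hηpos : 0 < η :=
          lt_of_le_of_ne (le_trans (abs_nonneg (x j)) (hx j)) (Ne.symm hη)
        simp only [Sum.elim_inr, if_neg hη]
        rw [abs_div, abs_of_pos hηpos]
        exact (div_le_one hηpos).mpr (hx j)
  · have hx0 : η = 0 → x = 0 := by
      intro h
      funext k
      have := hx k
      rw [h] at this
      simpa using abs_nonpos_iff.mp this
    rw [Fintype.sum_sum_type]
    simp only [Sum.elim_inl, Sum.elim_inr]
    rw [← add_assoc]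
    have hleft : P.mulVec (y - cv) + ∑ i, (-βv i) • P.mulVec (Gv i)
        = (P * H).mulVec x := by
      have hyc : y - cv = H.mulVec x + ∑ i, βv i • Gv i := by
        rw [hy, hveq]; abel
      rw [hyc, Matrix.mulVec_add]
      have hsum : P.mulVec (∑ i, βv i • Gv i) = ∑ i, βv i • P.mulVec (Gv i) := by
        rw [show P.mulVec = P.mulVecLin from rfl, map_sum]
        simp
      rw [hsum, Matrix.mulVec_mulVec,
        show (∑ i, (-βv i) • P.mulVec (Gv i))
          = -∑ i, βv i • P.mulVec (Gv i) by simp [neg_smul]]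
      abel
    have hright : (∑ j, (if η = 0 then 0 else x j / η) •
        (fun k : Fin nx => η * M k j)) = M.mulVec x := by
      funext k
      by_cases hη : η = 0
      · simp [hη, hx0 hη, Matrix.mulVec]
      · simp only [if_neg hη, Finset.sum_apply, Pi.smul_apply,
          smul_eq_mul, Matrix.mulVec, dotProduct]
        refine Finset.sum_congr rfl fun j _ => ?_
        field_simp
    rw [hleft, hright, ← Matrix.add_mulVec]
    simp [hM]
end

section
/- One-step reachability over-approximation: suppose for all ξ = (x, u) ∈ F, f_H(ξ) ∈ M̂(1, ξ − ξ*) + Z_L + Z_ε where M̂ is a linear map on ℝ^{1+m} and Z_L, Z_ε are zonotopes. Suppose the output satisfies y(k+1) = f_H(x(k), u(k)) + Hw(k) + v(k+1) with w(k) ∈ Z_w, v(k+1) ∈ Z_v. If x(k) ∈ R^x and u(k) ∈ Z_u with R^x × Z_u ⊆ F, then y(k+1) ∈ M̂(1 × ((R^x × Z_u) − ξ*)) + Z_v + H Z_w + Z_L + Z_ε. -/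
open Pointwise

theorem one_step_reachability_over_approximation {nx nu ny : ℕ}
    (F : Set ((Fin nx → ℝ) × (Fin nu → ℝ)))
    (fH : (Fin nx → ℝ) × (Fin nu → ℝ) → Fin ny → ℝ)
    (Mhat : (ℝ × ((Fin nx → ℝ) × (Fin nu → ℝ))) →ₗ[ℝ] (Fin ny → ℝ))
    (ξstar : (Fin nx → ℝ) × (Fin nu → ℝ))
    (ZL Zeps Zv : Set (Fin ny → ℝ)) (Zw : Set (Fin nx → ℝ))
    (H : Matrix (Fin ny) (Fin nx) ℝ)
    (Rx : Set (Fin nx → ℝ)) (Zu : Set (Fin nu → ℝ))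
    (x : Fin nx → ℝ) (u : Fin nu → ℝ) (w : Fin nx → ℝ)
    (v y : Fin ny → ℝ)
    (happrox : ∀ ξ ∈ F, fH ξ ∈ ({Mhat (1, ξ - ξstar)} : Set (Fin ny → ℝ)) + ZL + Zeps)
    (hdyn : y = fH (x, u) + H.mulVec w + v)
    (hw : w ∈ Zw) (hv : v ∈ Zv) (hx : x ∈ Rx) (hu : u ∈ Zu)
    (hF : Rx ×ˢ Zu ⊆ F) :
    y ∈ (fun ξ : (Fin nx → ℝ) × (Fin nu → ℝ) => Mhat (1, ξ - ξstar)) '' (Rx ×ˢ Zu)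
        + Zv + (fun w => H.mulVec w) '' Zw + ZL + Zeps := by
  have hmem : ((x, u) : (Fin nx → ℝ) × (Fin nu → ℝ)) ∈ Rx ×ˢ Zu := ⟨hx, hu⟩
  obtain ⟨s, hs, e, he, hfH⟩ := happrox (x, u) (hF hmem)
  obtain ⟨m, hm, l, hl, hml⟩ := hs
  rw [Set.mem_singleton_iff] at hm
  have : y = (Mhat (1, (x, u) - ξstar) + v + H.mulVec w) + l + e := by
    subst hdyn hm; rw [← hfH, ← hml]; beta_reduce; abel
  rw [this]
  exact Set.add_mem_add (Set.add_mem_add (Set.add_mem_add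
    (Set.add_mem_add ⟨(x, u), hmem, rfl⟩ hv) ⟨w, hw, rfl⟩) hl) he
end

section
/- State-set recovery step: under the assumptions that ‖x(k)‖_∞ ≤ η, y(k) = Hx(k) + v(k) with v(k) ∈ Z_v, and y(k) ∈ R^y for a set R^y ⊆ ℝ^{n_y}, the state satisfies x(k) ∈ H†(R^y − Z_v) + (I − H†H) Z_η, where H is full row rank, H† = Hᵀ(HHᵀ)⁻¹, and Z_η = {x : ‖x‖_∞ ≤ η}. -/
open Pointwise

theorem state_set_recovery {ny nx : ℕ}
    (H : Matrix (Fin ny) (Fin nx) ℝ) (hrank : H.rank = ny)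
    (η : ℝ) (Zv Ry : Set (Fin ny → ℝ))
    (x : Fin nx → ℝ) (v y : Fin ny → ℝ)
    (hx : ∀ k, |x k| ≤ η)
    (hv : v ∈ Zv) (hy : y = H.mulVec x + v) (hyR : y ∈ Ry) :
    x ∈ (fun z => (H.transpose * (H * H.transpose)⁻¹).mulVec z) '' (Ry - Zv)
        + (fun z => ((1 : Matrix (Fin nx) (Fin nx) ℝ)
              - H.transpose * (H * H.transpose)⁻¹ * H).mulVec z)
            '' {z : Fin nx → ℝ | ∀ k, |z k| ≤ η} := by
  have h1 : y - v = H.mulVec x := by simp [hy]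
  refine Set.mem_add.mpr ⟨_, ⟨y - v, Set.sub_mem_sub hyR hv, rfl⟩, _, ⟨x, hx, rfl⟩, ?_⟩
  simp [h1, Matrix.mulVec_mulVec, Matrix.sub_mulVec, Matrix.one_mulVec, Matrix.mul_assoc]
end
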